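/- Let Σ be the ranked alphabet with one binary symbol σ and one nullary symbol α, and let L_1 ⊆ T_Σ be the comb tree language defined below. Then for every ℓ ≥ 1 and every tree u ∈ L_1, SP^ℓ_1(u) = ∅. -/

import Mathlib

/-!
Every tree of `L_1` is a comb `σ(⋯σ(σ(α, α), α)⋯, α)`, so at each branching node the right
child is the leaf `α`. A leaf has no branching positions, hence `SP^ℓ_0(α) = ∅`; but a triple
`(w, i, j) ∈ SSP^ℓ_1` needs an element of `SP^ℓ_0` below both children `w ++ [i]`, `w ++ [j]`,
and one of the two distinct directions `i, j < 2` is the right child `1`.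
-/

namespace Paper

/-- Trees over a ranked alphabet `(Γ, ar)` as a W-type. -/
abbrev Tree {Γ : Type} (ar : Γ → ℕ) : Type := WType (fun g : Γ => Fin (ar g))

variable {Γ : Type} {ar : Γ → ℕ}

/-- Root symbol of a tree. -/
def root : Tree ar → Γ
  | ⟨g, _⟩ => g

/-- `inPos t w` holds iff `w` is a position of `t`. -/
def inPos : Tree ar → List ℕ → Prop
  | _, [] => True
  | ⟨g, f⟩, i :: w => ∃ h : i < ar g, inPos (f ⟨i, h⟩) w

/-- The set of positions of a tree. -/
def pos (t : Tree ar) : Set (List ℕ) := {w | inPos t w}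

/-- Subtree of `t` at position `w` (junk value if `w` is not a position of `t`). -/
def subtree : Tree ar → List ℕ → Tree ar
  | t, [] => t
  | ⟨g, f⟩, i :: w => if h : i < ar g then subtree (f ⟨i, h⟩) w else ⟨g, f⟩

/-- Branching positions of `t` together with two distinct successor directions. -/
def branch (t : Tree ar) : Set (List ℕ × ℕ × ℕ) :=
  {p | p.1 ∈ pos t ∧ 2 ≤ ar (root (subtree t p.1)) ∧
       p.2.1 < ar (root (subtree t p.1)) ∧ p.2.2 < ar (root (subtree t p.1)) ∧ p.2.1 ≠ p.2.2}

/-- Branching positions of `t` along the path from `w` to `w ++ w''`. -/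
def branchPath (t : Tree ar) (w w'' : List ℕ) : Set (List ℕ) :=
  {v | ∃ w', w' <+: w'' ∧ v = w ++ w' ∧ ∃ i j, (w ++ w', i, j) ∈ branch t}

/-- First projections of a set of triples. -/
def SPof (S : Set (List ℕ × ℕ × ℕ)) : Set (List ℕ) := {w | ∃ i j, (w, i, j) ∈ S}

/-- The sets `SSP^ℓ_n(t)`. -/
def SSP (ℓ : ℕ) : ℕ → Tree ar → Set (List ℕ × ℕ × ℕ)
  | 0, t => branch t
  | n+1, t =>
      {p | p ∈ branch t ∧
        (∃ w₁ ∈ SPof (SSP ℓ n (subtree t (p.1 ++ [p.2.1]))),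
          ℓ ^ (n+1) ≤ (branchPath t (p.1 ++ [p.2.1]) w₁ ∩ SPof (SSP ℓ n t)).ncard) ∧
        (∃ w₂ ∈ SPof (SSP ℓ n (subtree t (p.1 ++ [p.2.2]))),
          ℓ ^ (n+1) ≤ (branchPath t (p.1 ++ [p.2.2]) w₂ ∩ SPof (SSP ℓ n t)).ncard)}

/-- The sets `SP^ℓ_n(t)`. -/
def SP (ℓ n : ℕ) (t : Tree ar) : Set (List ℕ) := SPof (SSP ℓ n t)

/-- Height of a tree: 0 for leaves, otherwise 1 + maximum height of the subtrees. -/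
def height : Tree ar → ℕ
  | ⟨_, f⟩ => Finset.univ.sup fun i => height (f i) + 1

/-- Arity function for the alphabet `Δ` extended with `k` nullary variables. -/
def extAr {Δ : Type} (arΔ : Δ → ℕ) (k : ℕ) : Δ ⊕ Fin k → ℕ := Sum.elim arΔ fun _ => 0

/-- Trees over `Δ` with variables `x_0, …, x_{k-1}`: the set `T_Δ(X_k)`. -/
abbrev TreeX {Δ : Type} (arΔ : Δ → ℕ) (k : ℕ) : Type := Tree (extAr arΔ k)

variable {Δ : Type} {arΔ : Δ → ℕ}

/-- Substitution `s[u 0, …, u (k-1)]` of trees for the variables. -/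
def subst {k : ℕ} (u : Fin k → Tree arΔ) : TreeX arΔ k → Tree arΔ
  | ⟨Sum.inl d, f⟩ => ⟨d, fun i => subst u (f i)⟩
  | ⟨Sum.inr i, _⟩ => u i

/-- The tree map `ĥ` induced by a tree homomorphism `h`. -/
def applyHom {arΓ : Γ → ℕ} (h : ∀ g : Γ, TreeX arΔ (arΓ g)) : Tree arΓ → Tree arΔ
  | ⟨g, f⟩ => subst (fun i => applyHom h (f i)) (h g)

/-- Number of occurrences of the variable `x_i` in a tree of `T_Δ(X_k)`. -/
def varCount {k : ℕ} (i : Fin k) : TreeX arΔ k → ℕ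
  | ⟨Sum.inl _, f⟩ => ∑ j, varCount i (f j)
  | ⟨Sum.inr j, _⟩ => if j = i then 1 else 0

/-- A tree homomorphism is linear if every variable occurs at most once in each image. -/
def Linear {arΓ : Γ → ℕ} (h : ∀ g : Γ, TreeX arΔ (arΓ g)) : Prop :=
  ∀ (g : Γ) (i : Fin (arΓ g)), varCount i (h g) ≤ 1

/-- A tree homomorphism is complete if every variable occurs at least once in each image. -/
def Complete {arΓ : Γ → ℕ} (h : ∀ g : Γ, TreeX arΔ (arΓ g)) : Prop :=
  ∀ (g : Γ) (i : Fin (arΓ g)), 1 ≤ varCount i (h g)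

/-- Substitution of trees with variables into a tree with variables. -/
def substC {k : ℕ} (u : Fin k → TreeX arΔ k) : TreeX arΔ k → TreeX arΔ k
  | ⟨Sum.inl d, f⟩ => ⟨Sum.inl d, fun i => substC u (f i)⟩
  | ⟨Sum.inr i, _⟩ => u i

/-- Embedding of trees into trees with variables. -/
def embed {k : ℕ} : Tree arΔ → TreeX arΔ k
  | ⟨d, f⟩ => ⟨Sum.inl d, fun i => embed (f i)⟩

/-- The alphabet with one binary symbol `σ` and one nullary symbol `α`. -/
inductive Sym : Type
  | sig : Sym
  | alp : Sym

/-- The arity function of `Sym`. -/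
def arSym : Sym → ℕ
  | .sig => 2
  | .alp => 0

/-- Trees over the alphabet `Σ = {σ, α}`. -/
abbrev TSig : Type := Tree arSym

/-- The tree `α`. -/
def alphaT : TSig := ⟨Sym.alp, Fin.elim0⟩

/-- The variable `x` as a context. -/
def varX : TreeX arSym 1 := ⟨Sum.inr 0, Fin.elim0⟩

/-- `σ(c, c')` as a context. -/
def sigX (c c' : TreeX arSym 1) : TreeX arSym 1 := ⟨Sum.inl Sym.sig, ![c, c']⟩

/-- The smallest set of contexts containing `σ(x, t)` for every `t ∈ Lprev` and
closed under context composition `c[c']`. -/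
inductive CtxSet (Lprev : Set TSig) : TreeX arSym 1 → Prop
  | base {t : TSig} : t ∈ Lprev → CtxSet Lprev (sigX varX (embed t))
  | comp {c c' : TreeX arSym 1} : CtxSet Lprev c → CtxSet Lprev c' →
      CtxSet Lprev (substC (fun _ => c') c)

/-- The comb languages: `L_0 = {α}` and `L_{i+1} = { c[α] | c ∈ C_{i+1} }`
where `C_{i+1}` is generated from `L_i`. -/
def Lang : ℕ → Set TSig
  | 0 => {alphaT}
  | i+1 => {t | ∃ c, CtxSet (Lang i) c ∧ subst (fun _ => alphaT) c = t}


inductive Comb : TSig → Prop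
  | alpha : Comb alphaT
  | node {t : TSig} : Comb t → Comb ⟨Sym.sig, ![t, alphaT]⟩

section Substitution

variable {Δ : Type} {arΔ : Δ → ℕ} {k : ℕ}

lemma subst_substC (u : Fin k → Tree arΔ) (v : Fin k → TreeX arΔ k) (c : TreeX arΔ k) :
    subst u (substC v c) = subst (fun i => subst u (v i)) c := by
  induction c with
  | mk g f ih =>
    cases g with
    | inl d => exact congrArg (WType.mk d) (funext ih)
    | inr i => rfl

lemma subst_embed (u : Fin k → Tree arΔ) (t : Tree arΔ) : subst u (embed (k := k) t) = t := by
  induction t with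
  | mk d f ih => exact congrArg (WType.mk d) (funext ih)

end Substitution

lemma subst_sigX_varX_embed (s t : TSig) :
    subst (fun _ => s) (sigX varX (embed t)) = ⟨Sym.sig, ![s, t]⟩ := by
  refine congrArg (WType.mk Sym.sig) (funext fun i => ?_)
  fin_cases i
  · rfl
  · exact subst_embed _ t

lemma CtxSet.comb_subst {c : TreeX arSym 1} (hc : CtxSet (Lang 0) c) {s : TSig} (hs : Comb s) :
    Comb (subst (fun _ => s) c) := by
  induction hc generalizing s with
  | base ht =>
    rcases ht with rfl
    rw [subst_sigX_varX_embed]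
    exact Comb.node hs
  | comp _ _ ih ih' =>
    rw [subst_substC]
    exact ih (ih' hs)

lemma comb_of_mem_lang_one {u : TSig} (hu : u ∈ Lang 1) : Comb u := by
  obtain ⟨c, hc, rfl⟩ := hu
  exact hc.comb_subst Comb.alpha

section Positions

variable {Γ : Type} {ar : Γ → ℕ}

lemma subtree_append {t : Tree ar} {w : List ℕ} (hw : inPos t w) (v : List ℕ) :
    subtree t (w ++ v) = subtree (subtree t w) v := by
  induction w generalizing t with
  | nil => obtain ⟨g, f⟩ := t; rfl
  | cons i w ih =>
    obtain ⟨g, f⟩ := t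
    obtain ⟨hi, hw⟩ := hw
    simp only [List.cons_append, subtree, dif_pos hi]
    exact ih hw

lemma eq_nil_of_inPos_of_ar_root_eq_zero {t : Tree ar} (ht : ar (root t) = 0) {w : List ℕ}
    (hw : inPos t w) : w = [] := by
  obtain ⟨g, f⟩ := t
  cases w with
  | nil => rfl
  | cons i w =>
    obtain ⟨hi, -⟩ := hw
    exact absurd ht (Nat.ne_zero_of_lt hi)

lemma branch_eq_empty_of_ar_root_eq_zero {t : Tree ar} (ht : ar (root t) = 0) :
    branch t = ∅ := by
  refine Set.eq_empty_of_forall_notMem fun ⟨w, i, j⟩ ⟨hw, h2, _⟩ => ?_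
  obtain rfl := eq_nil_of_inPos_of_ar_root_eq_zero ht hw
  exact absurd ht (by simp only [subtree] at h2; omega)

lemma SSP_subset_branch (ℓ n : ℕ) (t : Tree ar) : SSP ℓ n t ⊆ branch t := by
  cases n with
  | zero => exact subset_rfl
  | succ n => exact fun _ hp => hp.1

lemma SP_eq_empty_of_ar_root_eq_zero (ℓ n : ℕ) {t : Tree ar} (ht : ar (root t) = 0) :
    SP ℓ n t = ∅ := by
  refine Set.eq_empty_of_forall_notMem fun w ⟨i, j, hw⟩ => ?_
  simpa [branch_eq_empty_of_ar_root_eq_zero ht] using SSP_subset_branch ℓ n t hw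

lemma SP_nonempty_of_mem_SSP_succ {ℓ n : ℕ} {t : Tree ar} {w : List ℕ} {i j : ℕ}
    (h : (w, i, j) ∈ SSP ℓ (n + 1) t) :
    (SP ℓ n (subtree t (w ++ [i]))).Nonempty ∧ (SP ℓ n (subtree t (w ++ [j]))).Nonempty := by
  obtain ⟨-, ⟨w₁, hw₁, -⟩, ⟨w₂, hw₂, -⟩⟩ := h
  exact ⟨⟨w₁, hw₁⟩, ⟨w₂, hw₂⟩⟩

end Positions

lemma arSym_le_two (g : Sym) : arSym g ≤ 2 := by
  cases g <;> decide

lemma Comb.comb_subtree {t : TSig} (ht : Comb t) {w : List ℕ} (hw : inPos t w) :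
    Comb (subtree t w) := by
  induction w generalizing t with
  | nil => obtain ⟨g, f⟩ := t; exact ht
  | cons i w ih =>
    cases ht with
    | alpha => exact absurd (eq_nil_of_inPos_of_ar_root_eq_zero rfl hw) (List.cons_ne_nil i w)
    | @node t' ht' =>
      obtain ⟨hi, hw⟩ := hw
      simp only [subtree, dif_pos hi]
      match i, hi with
      | 0, _ => exact ih ht' hw
      | 1, _ => exact ih Comb.alpha hw

lemma Comb.ar_root_subtree_one {t : TSig} (ht : Comb t) (h2 : 2 ≤ arSym (root t)) :
    arSym (root (subtree t [1])) = 0 := by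
  cases ht with
  | alpha => exact absurd h2 (by decide)
  | node => rfl

theorem comb_SP_one_empty_general (ℓ : ℕ) (u : TSig) (hu : u ∈ Lang 1) :
    SP ℓ 1 u = ∅ := by
  refine Set.eq_empty_of_forall_notMem fun w ⟨i, j, hw⟩ => ?_
  obtain ⟨hpos, h2, hi, hj, hij⟩ := SSP_subset_branch ℓ 1 u hw
  dsimp only at hpos h2 hi hj hij
  have hleaf : arSym (root (subtree u (w ++ [1]))) = 0 := by
    rw [subtree_append hpos]
    exact ((comb_of_mem_lang_one hu).comb_subtree hpos).ar_root_subtree_one h2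
  have hempty := SP_eq_empty_of_ar_root_eq_zero ℓ 0 hleaf
  obtain ⟨hSPi, hSPj⟩ := SP_nonempty_of_mem_SSP_succ hw
  have hij1 : i = 1 ∨ j = 1 := by
    have := arSym_le_two (root (subtree u w))
    omega
  rcases hij1 with rfl | rfl
  · exact hSPi.ne_empty hempty
  · exact hSPj.ne_empty hempty

/-- for every `ℓ ≥ 1` and every tree `u ∈ L_1`, `SP^ℓ_1(u) = ∅`. -/
theorem comb_SP_one_empty (ℓ : ℕ) (hℓ : 1 ≤ ℓ) (u : TSig) (hu : u ∈ Lang 1) :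
    SP ℓ 1 u = ∅ :=
  comb_SP_one_empty_general ℓ u hu

end Paper
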